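/- Let u_n = Σ_{ν=0}^{n} ((1/2)_ν^3 / ν!^3) · ((1/2)_{n-ν} / (n-ν)!), where (x)_k is the Pochhammer symbol. For every complex number z with |z| < 1, Σ_{n≥0} u_n ((1/3)_n (2/3)_n / n!^2) z^n = (₃F₂(1/6, 1/2, 5/6; 1, 1; z))^2, where ₃F₂(a₁,a₂,a₃;b₁,b₂;z) = Σ_{n≥0} (a₁)_n (a₂)_n (a₃)_n / (n! (b₁)_n (b₂)_n) z^n. -/

import Mathlib

/-
By the Cauchy product it suffices to show `∑_{k ≤ n} b_k b_{n-k} = w_n u_n`, where `b_n` is the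
`n`-th coefficient of `₃F₂(1/6, 1/2, 5/6; 1, 1; z)` and `w_n = (1/3)_n (2/3)_n / n!²`. Both
`∑ b_k b_{n-k}` and `u_n = ∑ e_k³ e_{n-k}`, with `e_n = (1/2)_n / n!`, are convolutions of
hypergeometric sequences, so creative telescoping (Zeilberger's algorithm) yields linear
recurrences for them. Once the hypergeometric factor `w_n` is absorbed, the two sides satisfy the
same second-order recurrence, and they agree for `n = 0, 1`.
-/

open Nat

/-- Pochhammer symbol `(x)_n = x(x+1)⋯(x+n-1)` over the complex numbers. -/
noncomputable def poch (x : ℂ) (n : ℕ) : ℂ := (ascPochhammer ℂ n).eval x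

/-- The sequence `u_n` from identity (7), as a complex number. -/
noncomputable def u (n : ℕ) : ℂ :=
  ∑ ν ∈ Finset.range (n + 1),
    (poch (1 / 2) ν) ^ 3 / ((ν ! : ℂ)) ^ 3 * (poch (1 / 2) (n - ν) / ((n - ν)! : ℂ))

open Finset

section Recurrences

variable {R : Type*} [CommRing R]

theorem recurrence_sum_range_of_telescoping {f H : ℕ → ℕ → R} {p₀ p₁ p₂ : ℕ → R}
    (hH : ∀ k m, p₀ (k + m) * f k m + p₁ (k + m) * f k (m + 1) + p₂ (k + m) * f k (m + 2)
      = H (k + 1) m - H k (m + 1)) (n : ℕ) :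
    p₀ n * ∑ k ∈ range (n + 1), f k (n - k) + p₁ n * ∑ k ∈ range (n + 2), f k (n + 1 - k)
      + p₂ n * ∑ k ∈ range (n + 3), f k (n + 2 - k)
      = H (n + 1) 0 - H 0 (n + 1) + p₁ n * f (n + 1) 0 + p₂ n * (f (n + 1) 1 + f (n + 2) 0) := by
  have shift (j : ℕ) :
      ∑ k ∈ range (n + 1), f k (n + j - k) = ∑ k ∈ range (n + 1), f k (n - k + j) :=
    sum_congr rfl fun k hk => by rw [Nat.sub_add_comm (Nat.lt_succ_iff.mp (mem_range.mp hk))]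
  have telescope : ∑ k ∈ range (n + 1),
      (p₀ n * f k (n - k) + p₁ n * f k (n - k + 1) + p₂ n * f k (n - k + 2))
      = H (n + 1) 0 - H 0 (n + 1) := by
    have h := sum_range_sub (fun k => H k (n + 1 - k)) (n + 1)
    simp only [Nat.sub_self, Nat.sub_zero] at h
    rw [← h]
    refine sum_congr rfl fun k hk => ?_
    have hk : k ≤ n := Nat.lt_succ_iff.mp (mem_range.mp hk)
    rw [show n + 1 - (k + 1) = n - k by omega, show n + 1 - k = n - k + 1 by omega, ← hH,
      Nat.add_sub_cancel' hk]
  rw [sum_range_succ _ (n + 1), shift, sum_range_succ _ (n + 2), sum_range_succ _ (n + 1), shift,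
    ← telescope]
  simp only [mul_add, mul_sum, sum_add_distrib, Nat.sub_self, show n + 2 - (n + 1) = 1 by omega]
  ring

theorem recurrence_sum_range_mul_of_certificate {x y ρ σ p₀ p₁ p₂ : ℕ → R} {G : ℕ → ℕ → R}
    (hx : ∀ k, x (k + 1) = x k * ρ k) (hy : ∀ m, y (m + 1) = y m * σ m)
    (hG : ∀ k m, p₀ (k + m) + p₁ (k + m) * σ m + p₂ (k + m) * (σ m * σ (m + 1))
      = G (k + 1) m * ρ k - G k (m + 1) * σ m)
    (hG₀ : ∀ m, G 0 m = 0) (hG_boundary : ∀ n, G (n + 1) 0 + p₁ n + p₂ n * (σ 0 + ρ (n + 1)) = 0)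
    (n : ℕ) :
    p₀ n * ∑ k ∈ range (n + 1), x k * y (n - k) + p₁ n * ∑ k ∈ range (n + 2), x k * y (n + 1 - k)
      + p₂ n * ∑ k ∈ range (n + 3), x k * y (n + 2 - k) = 0 := by
  rw [recurrence_sum_range_of_telescoping (f := fun k m => x k * y m)
    (H := fun k m => G k m * (x k * y m)) fun k m => ?_]
  · simp only [hG₀, hx, hy]
    linear_combination x n * ρ n * y 0 * hG_boundary n
  · simp only [hx, hy]
    linear_combination x k * y m * hG k m

theorem eq_of_linear_recurrence [IsDomain R] {p₀ p₁ p₂ s t : ℕ → R} (hp₂ : ∀ n, p₂ n ≠ 0)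
    (hs : ∀ n, p₀ n * s n + p₁ n * s (n + 1) + p₂ n * s (n + 2) = 0)
    (ht : ∀ n, p₀ n * t n + p₁ n * t (n + 1) + p₂ n * t (n + 2) = 0)
    (h₀ : s 0 = t 0) (h₁ : s 1 = t 1) : s = t := by
  suffices h : ∀ n, s n = t n ∧ s (n + 1) = t (n + 1) from funext fun n => (h n).1
  intro n
  induction n with
  | zero => exact ⟨h₀, h₁⟩
  | succ n ih =>
    refine ⟨ih.2, mul_left_cancel₀ (hp₂ n) ?_⟩
    linear_combination hs n - ht n - p₀ n * ih.1 - p₁ n * ih.2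

end Recurrences

noncomputable def pochDivFactorial (x : ℂ) (n : ℕ) : ℂ := poch x n / n !

noncomputable def pochRatio (x : ℂ) (n : ℕ) : ℂ := (x + n) / (n + 1)

@[simp]
theorem pochDivFactorial_zero (x : ℂ) : pochDivFactorial x 0 = 1 := by
  simp [pochDivFactorial, poch]

theorem pochDivFactorial_succ (x : ℂ) (n : ℕ) :
    pochDivFactorial x (n + 1) = pochDivFactorial x n * pochRatio x n := by
  rw [pochDivFactorial, pochDivFactorial, pochRatio, poch, poch, ascPochhammer_succ_eval,
    factorial_succ, Nat.cast_mul, Nat.cast_succ, mul_comm ((n : ℂ) + 1), mul_div_mul_comm]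

theorem norm_pochDivFactorial_le_one {x : ℝ} (hx₀ : 0 ≤ x) (hx₁ : x ≤ 1) (n : ℕ) :
    ‖pochDivFactorial x n‖ ≤ 1 := by
  induction n with
  | zero => simp
  | succ n ih =>
    have hratio : ‖pochRatio x n‖ ≤ 1 := by
      rw [pochRatio, show ((x : ℂ) + n) / (n + 1) = ((x + n) / (n + 1) : ℝ) by push_cast; rfl,
        Complex.norm_real, Real.norm_eq_abs, abs_div, abs_of_nonneg (by positivity),
        abs_of_pos (by positivity), div_le_one (by positivity)]
      linarith
    rw [pochDivFactorial_succ, norm_mul]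
    exact mul_le_one₀ ih (norm_nonneg _) hratio

noncomputable def coeff3F2 (n : ℕ) : ℂ :=
  pochDivFactorial (1 / 6) n * pochDivFactorial (1 / 2) n * pochDivFactorial (5 / 6) n

noncomputable def ratio3F2 (n : ℕ) : ℂ :=
  pochRatio (1 / 6) n * pochRatio (1 / 2) n * pochRatio (5 / 6) n

noncomputable def coeff2F1 (n : ℕ) : ℂ := pochDivFactorial (1 / 3) n * pochDivFactorial (2 / 3) n

noncomputable def ratio2F1 (n : ℕ) : ℂ := pochRatio (1 / 3) n * pochRatio (2 / 3) n

theorem coeff3F2_succ (n : ℕ) : coeff3F2 (n + 1) = coeff3F2 n * ratio3F2 n := by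
  simp only [coeff3F2, ratio3F2, pochDivFactorial_succ]
  ring

theorem coeff2F1_succ (n : ℕ) : coeff2F1 (n + 1) = coeff2F1 n * ratio2F1 n := by
  simp only [coeff2F1, ratio2F1, pochDivFactorial_succ]
  ring

theorem norm_coeff3F2_le_one (n : ℕ) : ‖coeff3F2 n‖ ≤ 1 := by
  have h (x : ℝ) (hx₀ : 0 ≤ x) (hx₁ : x ≤ 1) : ‖pochDivFactorial x n‖ ≤ 1 :=
    norm_pochDivFactorial_le_one hx₀ hx₁ n
  have h₁ := h (1 / 6) (by norm_num) (by norm_num)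
  have h₂ := h (1 / 2) (by norm_num) (by norm_num)
  have h₃ := h (5 / 6) (by norm_num) (by norm_num)
  push_cast at h₁ h₂ h₃
  rw [coeff3F2, norm_mul, norm_mul]
  exact mul_le_one₀ (mul_le_one₀ h₁ (norm_nonneg _) h₂) (norm_nonneg _) h₃

theorem summable_norm_coeff3F2_mul_pow {z : ℂ} (hz : ‖z‖ < 1) :
    Summable fun n => ‖coeff3F2 n * z ^ n‖ := by
  refine .of_nonneg_of_le (fun n => norm_nonneg _) (fun n => ?_)
    (summable_geometric_of_lt_one (norm_nonneg z) hz)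
  rw [norm_mul, norm_pow]
  exact mul_le_of_le_one_left (by positivity) (norm_coeff3F2_le_one n)

theorem u_eq_sum (n : ℕ) :
    u n = ∑ k ∈ range (n + 1),
      pochDivFactorial (1 / 2) k ^ 3 * pochDivFactorial (1 / 2) (n - k) := by
  simp only [u, pochDivFactorial, div_pow]

noncomputable def recCoeff₀ (n : ℕ) : ℂ :=
  8 * (n + 1) * (3 * n + 1) * (3 * n + 2) * (3 * n + 4) * (3 * n + 5)

noncomputable def recCoeff₁ (n : ℕ) : ℂ :=
  -9 * (2 * n + 3) * (3 * n + 4) * (3 * n + 5) * (8 * n ^ 2 + 24 * n + 21)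

noncomputable def recCoeff₂ (n : ℕ) : ℂ := 648 * (n + 2) ^ 5

-- Telescoping certificates found by Zeilberger's algorithm.

noncomputable def certSquare (k m : ℕ) : ℂ :=
  9 * k ^ 3 * (2 * (m + 1) ^ 2 * (90 * m ^ 2 + 78 * m + 13)
    + k * (m + 1) * (288 * m ^ 2 + 346 * m + 83) + k ^ 2 * (108 * m ^ 2 + 170 * m + 67))
    / (m + 1) ^ 3

noncomputable def certU (k m : ℕ) : ℂ :=
  4 * k ^ 3 * (9 * (k + m) ^ 2 - 1) * (9 * (k + m) ^ 2 - 4) / ((m + 1) * (k + m) ^ 2)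

theorem certSquare_telescopes (k m : ℕ) :
    recCoeff₀ (k + m) + recCoeff₁ (k + m) * ratio3F2 m
      + recCoeff₂ (k + m) * (ratio3F2 m * ratio3F2 (m + 1))
      = certSquare (k + 1) m * ratio3F2 k - certSquare k (m + 1) * ratio3F2 m := by
  have hk : (k : ℂ) + 1 ≠ 0 := by exact_mod_cast Nat.succ_ne_zero k
  have hm : (m : ℂ) + 1 ≠ 0 := by exact_mod_cast Nat.succ_ne_zero m
  have hm' : (m : ℂ) + 1 + 1 ≠ 0 := by exact_mod_cast Nat.succ_ne_zero (m + 1)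
  simp only [ratio3F2, pochRatio, recCoeff₀, recCoeff₁, recCoeff₂, certSquare, Nat.cast_add,
    Nat.cast_one]
  field_simp
  ring

theorem certSquare_boundary (n : ℕ) :
    certSquare (n + 1) 0 + recCoeff₁ n + recCoeff₂ n * (ratio3F2 0 + ratio3F2 (n + 1)) = 0 := by
  have hn : (n : ℂ) + 1 + 1 ≠ 0 := by exact_mod_cast Nat.succ_ne_zero (n + 1)
  simp only [ratio3F2, pochRatio, recCoeff₁, recCoeff₂, certSquare, Nat.cast_add, Nat.cast_one,
    Nat.cast_zero]
  field_simp
  ring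

theorem certU_telescopes (k m : ℕ) :
    recCoeff₀ (k + m) + recCoeff₁ (k + m) * ratio2F1 (k + m) * pochRatio (1 / 2) m
      + recCoeff₂ (k + m) * (ratio2F1 (k + m) * ratio2F1 (k + m + 1))
        * (pochRatio (1 / 2) m * pochRatio (1 / 2) (m + 1))
      = certU (k + 1) m * pochRatio (1 / 2) k ^ 3 - certU k (m + 1) * pochRatio (1 / 2) m := by
  have hk : (k : ℂ) + 1 ≠ 0 := by exact_mod_cast Nat.succ_ne_zero k
  have hm : (m : ℂ) + 1 ≠ 0 := by exact_mod_cast Nat.succ_ne_zero m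
  have hm' : (m : ℂ) + 1 + 1 ≠ 0 := by exact_mod_cast Nat.succ_ne_zero (m + 1)
  have hkm : (k : ℂ) + m + 1 ≠ 0 := by exact_mod_cast Nat.succ_ne_zero (k + m)
  have hkm' : (k : ℂ) + m + 1 + 1 ≠ 0 := by exact_mod_cast Nat.succ_ne_zero (k + m + 1)
  have hk1m : (k : ℂ) + 1 + m ≠ 0 := by rw [add_right_comm]; exact hkm
  have hkm1 : (k : ℂ) + (m + 1) ≠ 0 := by rw [← add_assoc]; exact hkm
  simp only [ratio2F1, pochRatio, recCoeff₀, recCoeff₁, recCoeff₂, certU, Nat.cast_add,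
    Nat.cast_one]
  field_simp
  ring

theorem certU_boundary (n : ℕ) :
    certU (n + 1) 0 + recCoeff₁ n * ratio2F1 n
      + recCoeff₂ n * (ratio2F1 n * ratio2F1 (n + 1))
        * (pochRatio (1 / 2) 0 + pochRatio (1 / 2) (n + 1) ^ 3) = 0 := by
  have hn : (n : ℂ) + 1 ≠ 0 := by exact_mod_cast Nat.succ_ne_zero n
  have hn' : (n : ℂ) + 1 + 1 ≠ 0 := by exact_mod_cast Nat.succ_ne_zero (n + 1)
  simp only [ratio2F1, pochRatio, recCoeff₁, recCoeff₂, certU, Nat.cast_add, Nat.cast_one,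
    Nat.cast_zero]
  field_simp
  ring

theorem recurrence_sum_coeff3F2_mul (n : ℕ) :
    recCoeff₀ n * ∑ k ∈ range (n + 1), coeff3F2 k * coeff3F2 (n - k)
      + recCoeff₁ n * ∑ k ∈ range (n + 2), coeff3F2 k * coeff3F2 (n + 1 - k)
      + recCoeff₂ n * ∑ k ∈ range (n + 3), coeff3F2 k * coeff3F2 (n + 2 - k) = 0 :=
  recurrence_sum_range_mul_of_certificate coeff3F2_succ coeff3F2_succ certSquare_telescopes
    (fun m => by simp [certSquare]) certSquare_boundary n

theorem recurrence_coeff2F1_mul_u (n : ℕ) :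
    recCoeff₀ n * (coeff2F1 n * u n) + recCoeff₁ n * (coeff2F1 (n + 1) * u (n + 1))
      + recCoeff₂ n * (coeff2F1 (n + 2) * u (n + 2)) = 0 := by
  have hu := recurrence_sum_range_mul_of_certificate (x := fun k => pochDivFactorial (1 / 2) k ^ 3)
    (p₁ := fun n => recCoeff₁ n * ratio2F1 n)
    (p₂ := fun n => recCoeff₂ n * (ratio2F1 n * ratio2F1 (n + 1)))
    (fun k => by rw [pochDivFactorial_succ, mul_pow]) (pochDivFactorial_succ (1 / 2))
    certU_telescopes (fun m => by simp [certU]) certU_boundary n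
  simp only [coeff2F1_succ, u_eq_sum]
  linear_combination coeff2F1 n * hu

theorem sum_coeff3F2_mul_eq_coeff2F1_mul_u (n : ℕ) :
    ∑ k ∈ range (n + 1), coeff3F2 k * coeff3F2 (n - k) = coeff2F1 n * u n := by
  refine congrFun (eq_of_linear_recurrence (fun n => ?_) recurrence_sum_coeff3F2_mul
    recurrence_coeff2F1_mul_u ?_ ?_) n
  · simp only [recCoeff₂]
    exact mul_ne_zero (by norm_num) (pow_ne_zero _ (by exact_mod_cast Nat.succ_ne_zero (n + 1)))
  · simp [u_eq_sum, coeff3F2, coeff2F1]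
  · simp [sum_range_succ, u_eq_sum, coeff3F2, coeff2F1, pochDivFactorial_succ, pochRatio]
    norm_num

/-- First equality of identity (10). -/
theorem curious_identity_3F2_square
    (z : ℂ) (hz : ‖z‖ < 1) :
    (∑' (n : ℕ), u n * ((poch (1 / 3) n * poch (2 / 3) n) / ((n ! : ℂ)) ^ 2) * z ^ n)
    = (∑' (n : ℕ),
        (poch (1 / 6) n * poch (1 / 2) n * poch (5 / 6) n) /
          ((n ! : ℂ) * poch 1 n * poch 1 n) * z ^ n) ^ 2 := by
  have hsummable := summable_norm_coeff3F2_mul_pow hz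
  have hcoeff3F2 (n : ℕ) : poch (1 / 6) n * poch (1 / 2) n * poch (5 / 6) n /
      ((n ! : ℂ) * poch 1 n * poch 1 n) = coeff3F2 n := by
    simp only [coeff3F2, pochDivFactorial, poch, ascPochhammer_eval_one]
    ring
  simp only [hcoeff3F2]
  rw [sq, tsum_mul_tsum_eq_tsum_sum_range_of_summable_norm hsummable hsummable]
  refine tsum_congr fun n => ?_
  calc u n * (poch (1 / 3) n * poch (2 / 3) n / (n ! : ℂ) ^ 2) * z ^ n
      = (∑ k ∈ range (n + 1), coeff3F2 k * coeff3F2 (n - k)) * z ^ n := by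
        rw [sum_coeff3F2_mul_eq_coeff2F1_mul_u, coeff2F1, pochDivFactorial, pochDivFactorial]
        ring
    _ = ∑ k ∈ range (n + 1), coeff3F2 k * z ^ k * (coeff3F2 (n - k) * z ^ (n - k)) := by
        rw [sum_mul]
        refine sum_congr rfl fun k hk => ?_
        rw [mul_mul_mul_comm, ← pow_add, Nat.add_sub_cancel' (Nat.lt_succ_iff.mp (mem_range.mp hk))]
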